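/- arXiv:math/0601141 — 3 statements merged into one kernel-verified Lean document; each statement's English description precedes it below -/
import Mathlib

section
/- Let X be a geometrically integral curve over an algebraically closed field k and let L be any field extension of k. Then γ_L(X) = γ_k(X). -/
open IntermediateField

set_option synthInstance.maxHeartbeats 1000000
set_option maxHeartbeats 2000000
set_option maxRecDepth 8000

/-- The gonality of the function field `F` of a curve over `k`: the smallest degree
`[F : k(f)]` of a nonconstant rational function `f ∈ F`, i.e. the smallest degree of a
dominant rational map from the curve to `ℙ¹_k`. -/
noncomputable def gonality (k F : Type*) [Field k] [Field F] [Algebra k F] : ℕ :=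
  sInf {d : ℕ | ∃ f : F, Transcendental k f ∧
    Module.finrank (IntermediateField.adjoin k {f}) F = d}

/-- `F` is the function field of a curve over `k`: a finitely generated field extension of
transcendence degree 1, i.e. a finite extension of some `k(x)` with `x` transcendental. -/
def IsFunctionField (k F : Type*) [Field k] [Field F] [Algebra k F] : Prop :=
  ∃ x : F, Transcendental k x ∧
    FiniteDimensional (IntermediateField.adjoin k {x}) F

section NSS
open Polynomial
lemma exists_algHom_ne_zero {k : Type*} [Field k] [IsAlgClosed k] {A : Type*} [CommRing A]
    [IsDomain A] [Algebra k A] {n : ℕ} (π : MvPolynomial (Fin n) k →ₐ[k] A)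
    (hπ : Function.Surjective π) (σ : A) (hσ : σ ≠ 0) : ∃ φ : A →ₐ[k] k, φ σ ≠ 0 := by
  obtain ⟨σ', rfl⟩ := hπ σ
  by_cases hex : ∃ x ∈ MvPolynomial.zeroLocus k (RingHom.ker π.toRingHom), MvPolynomial.eval x σ' ≠ 0
  · obtain ⟨x, hx, hxσ⟩ := hex
    have h0 : ∀ p ∈ RingHom.ker π.toRingHom, (MvPolynomial.aeval x) p = 0 := by
      intro p hp
      have h := (MvPolynomial.mem_zeroLocus_iff).mp hx p hp
      exact h
    let e := Ideal.quotientKerAlgEquivOfSurjective (f := π) hπ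
    refine ⟨(Ideal.Quotient.liftₐ (RingHom.ker π.toRingHom) (MvPolynomial.aeval x) h0).comp
      e.symm.toAlgHom, ?_⟩
    have he2 : e (Ideal.Quotient.mk (RingHom.ker π.toRingHom) σ') = π σ' := rfl
    have he : e.symm (π σ') = Ideal.Quotient.mk (RingHom.ker π.toRingHom) σ' := by
      apply e.injective; rw [he2]; exact e.apply_symm_apply _
    change (Ideal.Quotient.liftₐ (RingHom.ker π.toRingHom) (MvPolynomial.aeval x) h0) (e.symm (π σ')) ≠ 0
    erw [he, Ideal.Quotient.liftₐ_apply, Ideal.Quotient.lift_mk]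
    rw [← MvPolynomial.coe_aeval_eq_eval] at hxσ
    exact hxσ
  · exfalso
    push_neg at hex
    have hmem : σ' ∈ MvPolynomial.vanishingIdeal k (MvPolynomial.zeroLocus k (RingHom.ker π.toRingHom)) := by
      intro x hx; exact hex x hx
    rw [MvPolynomial.vanishingIdeal_zeroLocus_eq_radical] at hmem
    obtain ⟨m, hm⟩ := hmem
    have h2 : (π σ') ^ m = 0 := by rw [← map_pow]; exact hm
    exact hσ (pow_eq_zero_iff'.mp h2).1

end NSS

section Rest
open Polynomial

section Utils

variable {K E : Type*} [Field K] [Field E] [Algebra K E]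

lemma aeval_ne_zero_of_transcendental {α : E} (hα : Transcendental K α) {q : K[X]}
    (hq : q ≠ 0) : aeval α q ≠ 0 := fun h0 =>
  hq (transcendental_iff_injective.mp hα (by rw [h0, map_zero]))

/-- If a sum `∑ eᵢ fⁱ` vanishes with `f` transcendental, all coefficients vanish. -/
lemma coeffs_eq_zero_of_transcendental {f : E} (hf : Transcendental K f) {n : ℕ} {e : ℕ → K}
    (h : ∑ i ∈ Finset.range n, algebraMap K E (e i) * f ^ i = 0) :
    ∀ i ∈ Finset.range n, e i = 0 := by
  have hr : (∑ i ∈ Finset.range n, C (e i) * X ^ i : K[X]) = 0 := by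
    apply transcendental_iff_injective.mp hf
    rw [map_zero, map_sum]
    simpa using h
  intro i hi
  have := congrArg (fun r => Polynomial.coeff r i) hr
  simp only [Polynomial.finset_sum_coeff, coeff_zero] at this
  rw [Finset.sum_eq_single i (fun j _ hji => by
    rw [Polynomial.coeff_C_mul, Polynomial.coeff_X_pow, if_neg (fun hh => hji hh.symm), mul_zero])
    (fun hni => absurd hi hni)] at this
  simpa using this

/-- A finite-dimensional spanning set closed under multiplication and containing 1
generates a set closed under multiplication and inverses. -/
lemma span_closed_mul_inv {n : ℕ} (u : Fin n → E)
    (h1 : (1 : E) ∈ Submodule.span K (Set.range u))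
    (hmul : ∀ i j, u i * u j ∈ Submodule.span K (Set.range u)) :
    (∀ x ∈ Submodule.span K (Set.range u), ∀ y ∈ Submodule.span K (Set.range u),
        x * y ∈ Submodule.span K (Set.range u)) ∧
      (∀ x ∈ Submodule.span K (Set.range u), x ≠ 0 → x⁻¹ ∈ Submodule.span K (Set.range u)) := by
  set V := Submodule.span K (Set.range u) with hV
  have hmulV : ∀ x ∈ V, ∀ y ∈ V, x * y ∈ V := by
    have key : ∀ i, ∀ y ∈ V, u i * y ∈ V := by
      intro i y hy
      induction hy using Submodule.span_induction with
      | mem z hz => obtain ⟨j, rfl⟩ := hz; exact hmul i j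
      | zero => simpa using V.zero_mem
      | add a b _ _ ha hb => rw [mul_add]; exact V.add_mem ha hb
      | smul c a _ ha => rw [Algebra.mul_smul_comm]; exact V.smul_mem c ha
    intro x hx y hy
    induction hx using Submodule.span_induction with
    | mem z hz => obtain ⟨i, rfl⟩ := hz; exact key i y hy
    | zero => simpa using V.zero_mem
    | add a b _ _ ha hb => rw [add_mul]; exact V.add_mem ha hb
    | smul c a _ ha => rw [Algebra.smul_mul_assoc]; exact V.smul_mem c ha
  refine ⟨hmulV, ?_⟩
  intro x hx hx0
  haveI : FiniteDimensional K V := FiniteDimensional.span_of_finite K (Set.finite_range u)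
  let lm : V →ₗ[K] V :=
    { toFun := fun y => ⟨x * (y : E), hmulV x hx _ y.2⟩
      map_add' := fun a b => by ext; simp [mul_add]
      map_smul' := fun c a => by ext; simp [Algebra.mul_smul_comm] }
  have hinj : Function.Injective lm := by
    intro a b hab
    ext
    have : x * (a : E) = x * (b : E) := congrArg Subtype.val hab
    exact mul_left_cancel₀ hx0 this
  obtain ⟨y, hy⟩ := (LinearMap.injective_iff_surjective.mp hinj) ⟨1, h1⟩
  have hxy : x * (y : E) = 1 := congrArg Subtype.val hy
  rw [inv_eq_of_mul_eq_one_right hxy]; exact y.2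

/-- Common denominator for finitely many elements of `K⟮α⟯`, `α` transcendental. -/
lemma exists_common_denominator {α : E} (hα : Transcendental K α) {ι : Type*} (s : Finset ι)
    (c : ι → ↥(IntermediateField.adjoin K {α})) :
    ∃ q : K[X], aeval α q ≠ 0 ∧ ∀ i ∈ s, ∃ p : K[X],
      (c i : E) * aeval α q = aeval α p := by
  classical
  induction s using Finset.induction with
  | empty => exact ⟨1, by simpa using aeval_ne_zero_of_transcendental hα one_ne_zero, by simp⟩
  | insert a s' hnotmem ih =>
    obtain ⟨q₀, hq₀, hq₀p⟩ := ih
    obtain ⟨r, s'', hrs⟩ := (IntermediateField.mem_adjoin_simple_iff K ((c a : E))).mp (c a).2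
    by_cases hs0 : aeval α s'' = 0
    · refine ⟨q₀, hq₀, fun i hi => ?_⟩
      rcases Finset.mem_insert.mp hi with rfl | hi'
      · exact ⟨0, by rw [hrs, hs0, div_zero, zero_mul, map_zero]⟩
      · exact hq₀p i hi'
    · refine ⟨s'' * q₀, by rw [map_mul]; exact mul_ne_zero hs0 hq₀, fun i hi => ?_⟩
      rcases Finset.mem_insert.mp hi with rfl | hi'
      · refine ⟨r * q₀, ?_⟩
        rw [hrs, map_mul, map_mul, ← mul_assoc, div_mul_cancel₀ _ hs0]
      · obtain ⟨p, hp⟩ := hq₀p i hi'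
        exact ⟨p * s'', by rw [map_mul, map_mul, ← mul_assoc, mul_right_comm, hp]⟩

/-- Transfer a spanning statement to a "larger" coefficient field. -/
lemma span_top_of_exists_algebraMap {A B : Type*} [Field A] [Field B] [Algebra A E] [Algebra B E]
    (hc : ∀ a : A, ∃ b : B, algebraMap B E b = algebraMap A E a) (s : Set E)
    (h : Submodule.span A s = ⊤) : Submodule.span B s = ⊤ := by
  have key : ∀ y ∈ Submodule.span A s, y ∈ Submodule.span B s := by
    intro y hy
    induction hy using Submodule.span_induction with
    | mem z hz => exact Submodule.subset_span hz
    | zero => exact Submodule.zero_mem _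
    | add a b _ _ ha hb => exact Submodule.add_mem _ ha hb
    | smul c a _ ha =>
      obtain ⟨b, hb⟩ := hc c
      rw [Algebra.smul_def, ← hb, ← Algebra.smul_def]
      exact Submodule.smul_mem _ b ha
  rw [eq_top_iff]
  exact fun y _ => key y (h ▸ Submodule.mem_top)

lemma finiteDimensional_of_span_top {ι : Type*} [Finite ι] (u : ι → E)
    (h : Submodule.span K (Set.range u) = ⊤) : FiniteDimensional K E :=
  ⟨Submodule.fg_def.mpr ⟨Set.range u, Set.finite_range u, h⟩⟩

end Utils

lemma coeff_sum_C_mul_X_pow {R : Type*} [Semiring R] (e : ℕ → R) {n m : ℕ}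
    (hm : m ∈ Finset.range n) :
    (∑ i ∈ Finset.range n, Polynomial.C (e i) * Polynomial.X ^ i).coeff m = e m := by
  rw [Polynomial.finset_sum_coeff]
  rw [Finset.sum_eq_single m (fun j _ hji => by
    rw [Polynomial.coeff_C_mul, Polynomial.coeff_X_pow, if_neg (fun hh => hji hh.symm), mul_zero])
    (fun hni => absurd hm hni)]
  simp

section Exchange

variable {k E : Type*} [Field k] [Field E] [Algebra k E]

lemma aeval_mem_adjoin_simple (x : E) {B : Type*} [Field B] [Algebra B E] (t : B[X]) :
    aeval x t ∈ IntermediateField.adjoin B {x} :=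
  (IntermediateField.mem_adjoin_simple_iff B _).mpr ⟨t, 1, by simp⟩

lemma finiteDimensional_adjoin_of_transcendental {x f : E} (hx : Transcendental k x)
    (hfin : FiniteDimensional (IntermediateField.adjoin k {x}) E) (hf : Transcendental k f) :
    FiniteDimensional (IntermediateField.adjoin k {f}) E := by
  set Kx := IntermediateField.adjoin k {x} with hKx
  set Kf := IntermediateField.adjoin k {f} with hKf
  have hint : IsIntegral Kx f := IsIntegral.of_finite Kx f
  set p := minpoly Kx f with hpdef
  have hp0 : aeval f p = 0 := minpoly.aeval _ _
  have hpm : p.Monic := minpoly.monic hint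
  set n := p.natDegree with hn
  obtain ⟨q, hq, hpr⟩ := exists_common_denominator (K := k) (E := E) hx (Finset.range (n+1))
    (fun i => p.coeff i)
  choose pr hpr' using hpr
  classical
  set pr2 : ℕ → k[X] := fun i => if h : i ∈ Finset.range (n+1) then pr i h else 0 with hpr2
  have h2 : ∀ i ∈ Finset.range (n+1), ((p.coeff i : E)) * aeval x q = aeval x (pr2 i) := by
    intro i hi; rw [hpr2]; simp only [dif_pos hi]; exact hpr' i hi
  have hsum : ∑ i ∈ Finset.range (n+1), ((p.coeff i : E)) * f ^ i = 0 := by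
    have := aeval_eq_sum_range' (p := p) (n := n+1) (by omega) f
    rw [hp0] at this
    have h3 : ∀ i ∈ Finset.range (n+1), (p.coeff i) • f ^ i = ((p.coeff i : E)) * f ^ i := by
      intro i _; rw [Algebra.smul_def]; rfl
    rw [← Finset.sum_congr rfl h3, ← this]
  have hsum2 : ∑ i ∈ Finset.range (n+1), aeval x (pr2 i) * f ^ i = 0 := by
    have : ∀ i ∈ Finset.range (n+1),
        aeval x (pr2 i) * f ^ i = ((p.coeff i : E)) * f ^ i * aeval x q := by
      intro i hi; rw [← h2 i hi]; ring
    rw [Finset.sum_congr rfl this, ← Finset.sum_mul, hsum, zero_mul]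
  set gf : ↥Kf := IntermediateField.AdjoinSimple.gen k f with hgf
  set PP : Polynomial ↥Kf :=
    ∑ i ∈ Finset.range (n+1), Polynomial.C (gf ^ i) * (pr2 i).map (algebraMap k ↥Kf) with hPP
  have hgfE : algebraMap ↥Kf E gf = f := IntermediateField.AdjoinSimple.algebraMap_gen k f
  have hPPaeval : aeval x PP = 0 := by
    rw [hPP, map_sum]
    have : ∀ i ∈ Finset.range (n+1),
        aeval x (Polynomial.C (gf ^ i) * (pr2 i).map (algebraMap k ↥Kf)) =
          aeval x (pr2 i) * f ^ i := by
      intro i _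
      rw [map_mul, Polynomial.aeval_C, Polynomial.aeval_map_algebraMap, map_pow, hgfE, mul_comm]
    rw [Finset.sum_congr rfl this, hsum2]
  have hPP0 : PP ≠ 0 := by
    intro hzero
    have hco : ∀ i ∈ Finset.range (n+1), ∀ m : ℕ, (pr2 i).coeff m = 0 := by
      intro i hi m
      have hxp : PP.coeff m =
          ∑ j ∈ Finset.range (n+1), gf ^ j * algebraMap k ↥Kf ((pr2 j).coeff m) := by
        rw [hPP, Polynomial.finset_sum_coeff]
        exact Finset.sum_congr rfl fun j _ => by
          rw [Polynomial.coeff_C_mul, Polynomial.coeff_map]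
      rw [hzero, Polynomial.coeff_zero] at hxp
      have h4 := congrArg (algebraMap ↥Kf E) hxp.symm
      rw [map_zero, map_sum] at h4
      have hcm2 : ∑ j ∈ Finset.range (n+1),
          algebraMap k E ((pr2 j).coeff m) * f ^ j = 0 := by
        rw [← h4]
        refine Finset.sum_congr rfl fun j _ => ?_
        rw [map_mul, map_pow, hgfE, mul_comm, ← IsScalarTower.algebraMap_apply k ↥Kf E]
      exact coeffs_eq_zero_of_transcendental hf hcm2 i hi
    have hprn : pr2 n = 0 := Polynomial.ext fun m => hco n (by simp) m
    have : ((p.coeff n : E)) * aeval x q = 0 := by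
      rw [h2 n (by simp), hprn, map_zero]
    rw [hn, hpm.coeff_natDegree] at this
    simp only [OneMemClass.coe_one, one_mul] at this
    exact hq this
  have halgx : IsAlgebraic ↥Kf x := ⟨PP, hPP0, hPPaeval⟩
  haveI : FiniteDimensional ↥Kf ↥Kf⟮x⟯ := IntermediateField.adjoin.finiteDimensional
    halgx.isIntegral
  obtain ⟨r, mm, hm⟩ := Module.Finite.exists_fin (R := ↥Kx) (M := E)
  have hc : ∀ a : ↥Kx, ∃ b : ↥Kf⟮x⟯, algebraMap ↥Kf⟮x⟯ E b = algebraMap ↥Kx E a := by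
    intro a
    obtain ⟨rr, ss, hrs⟩ := (IntermediateField.mem_adjoin_simple_iff k ((a : E))).mp a.2
    have hmem : (a : E) ∈ Kf⟮x⟯ := by
      rw [hrs, ← Polynomial.aeval_map_algebraMap (R := k) (A := ↥Kf) (B := E) x rr,
        ← Polynomial.aeval_map_algebraMap (R := k) (A := ↥Kf) (B := E) x ss]
      exact div_mem (aeval_mem_adjoin_simple x _) (aeval_mem_adjoin_simple x _)
    exact ⟨⟨(a : E), hmem⟩, rfl⟩
  have hsp : Submodule.span ↥Kf⟮x⟯ (Set.range mm) = ⊤ :=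
    span_top_of_exists_algebraMap hc _ hm
  haveI : FiniteDimensional ↥Kf⟮x⟯ E := finiteDimensional_of_span_top mm hsp
  exact FiniteDimensional.trans ↥Kf ↥Kf⟮x⟯ E

end Exchange

section BaseChange

variable {k F L : Type*} [Field k] [Field F] [Algebra k F] [Field L] [Algebra k L]
variable [IsDomain (TensorProduct k L F)]
variable {M : Type*} [Field M] [Algebra (TensorProduct k L F) M]
  [IsFractionRing (TensorProduct k L F) M]
  [Algebra L M] [IsScalarTower L (TensorProduct k L F) M]
  [Algebra k M] [IsScalarTower k L M] [IsScalarTower k (TensorProduct k L F) M]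

local notation "T" => TensorProduct k L F

/-- The canonical embedding `F → M = Frac(L ⊗ F)`. -/
noncomputable def theta (k L : Type*) {F : Type*} [Field k] [Field F] [Algebra k F] [Field L]
    [Algebra k L] {M : Type*} [Field M] [Algebra (TensorProduct k L F) M]
    [Algebra k M] [IsScalarTower k (TensorProduct k L F) M] : F →ₐ[k] M :=
  (IsScalarTower.toAlgHom k (TensorProduct k L F) M).comp Algebra.TensorProduct.includeRight

lemma theta_apply (y : F) : theta k L (M := M) y = algebraMap T M (1 ⊗ₜ y) := rfl

lemma j_tmul (l : L) (y : F) :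
    algebraMap T M (l ⊗ₜ y) = algebraMap L M l * theta k L (M := M) y := by
  have : (l ⊗ₜ y : T) = (algebraMap L T l) * (1 ⊗ₜ y : T) := by
    rw [Algebra.TensorProduct.algebraMap_apply, Algebra.TensorProduct.tmul_mul_tmul,
      mul_one, one_mul]
    simp
  rw [this, map_mul, ← IsScalarTower.algebraMap_apply L T M, theta_apply]

lemma theta_transcendental {f : F} (hf : Transcendental k f) :
    Transcendental L (theta k L (M := M) f) := by
  set g := theta k L (M := M) f with hg
  -- the composite ring hom L[X] → M
  set m2 : TensorProduct k L k[X] →ₐ[k] T :=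
    Algebra.TensorProduct.map (AlgHom.id k L) (Polynomial.aeval f : k[X] →ₐ[k] F) with hm2
  have hm2inj : Function.Injective m2 := by
    have heq : m2.toLinearMap = LinearMap.lTensor L (Polynomial.aeval f).toLinearMap := by
      apply TensorProduct.ext'
      intro x y
      simp [hm2]
    have hinj : Function.Injective ⇑(Polynomial.aeval f).toLinearMap :=
      transcendental_iff_injective.mp hf
    have := Module.Flat.lTensor_preserves_injective_linearMap
      (M := L) (Polynomial.aeval f).toLinearMap hinj
    rw [← heq] at this
    exact this
  have key : ∀ p : L[X], Polynomial.aeval g p =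
      algebraMap T M (m2 ((polyEquivTensor k L) p)) := by
    intro p
    induction p using Polynomial.induction_on' with
    | add p q hp hq => rw [map_add, map_add, map_add, map_add, hp, hq]
    | monomial n l =>
      rw [Polynomial.aeval_monomial, polyEquivTensor_apply, Polynomial.eval₂_monomial]
      have h1 : ((Algebra.TensorProduct.includeLeft : L →ₐ[k] TensorProduct k L k[X]) l) *
          ((1 : L) ⊗ₜ[k] (Polynomial.X : k[X])) ^ n = l ⊗ₜ[k] (Polynomial.X ^ n : k[X]) := by
        rw [Algebra.TensorProduct.includeLeft_apply, Algebra.TensorProduct.tmul_pow,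
          Algebra.TensorProduct.tmul_mul_tmul]
        simp
      erw [h1, hm2, Algebra.TensorProduct.map_tmul]
      simp only [AlgHom.coe_id, id_eq, map_pow, Polynomial.aeval_X]
      try rw [j_tmul, map_pow]
      try rfl
  rw [transcendental_iff_injective]
  intro p q hpq
  rw [key, key] at hpq
  exact (polyEquivTensor k L).injective (hm2inj (IsFractionRing.injective T M hpq))

lemma easy_direction {f : F} (hf : Transcendental k f)
    (hfd : FiniteDimensional (IntermediateField.adjoin k {f}) F) :
    ∃ g : M, Transcendental L g ∧ FiniteDimensional (IntermediateField.adjoin L {g}) M ∧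
      Module.finrank (IntermediateField.adjoin L {g}) M ≤
        Module.finrank (IntermediateField.adjoin k {f}) F := by
  classical
  set K₀ := IntermediateField.adjoin k {f} with hK₀
  set d := Module.finrank K₀ F with hd
  set β : Module.Basis (Fin d) ↥K₀ F := Module.finBasis ↥K₀ F with hβ
  set Θ : F →ₐ[k] M := theta k L with hΘ
  set g : M := Θ f with hg
  have hgt : Transcendental L g := theta_transcendental hf
  set K : IntermediateField L M := IntermediateField.adjoin L {g} with hK
  -- scalars transfer
  have hscal : ∀ c : ↥K₀, Θ (c : F) ∈ K := by
    intro c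
    obtain ⟨r, s, hrs⟩ := (IntermediateField.mem_adjoin_simple_iff k ((c : F))).mp c.2
    rw [hrs, map_div₀, ← Polynomial.aeval_algHom_apply, ← Polynomial.aeval_algHom_apply]
    rw [← Polynomial.aeval_map_algebraMap (R := k) (A := L) (B := M) (Θ f) r,
      ← Polynomial.aeval_map_algebraMap (R := k) (A := L) (B := M) (Θ f) s]
    exact div_mem (aeval_mem_adjoin_simple _ _) (aeval_mem_adjoin_simple _ _)
  set u : Fin d → M := fun i => Θ (β i) with hu
  set V := Submodule.span ↥K (Set.range u) with hV
  have hz : ∀ y : F, Θ y ∈ V := by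
    intro y
    have hrepr : ∑ i, β.repr y i • β i = y := β.sum_repr y
    have : Θ y = ∑ i, Θ ((β.repr y i : F)) * u i := by
      conv_lhs => rw [← hrepr]
      rw [map_sum]
      refine Finset.sum_congr rfl fun i _ => ?_
      rw [Algebra.smul_def, map_mul]
      rfl
    rw [this]
    refine Submodule.sum_mem _ fun i _ => ?_
    have : Θ ((β.repr y i : F)) * u i = (⟨Θ ((β.repr y i : F)), hscal _⟩ : ↥K) • u i := by
      rw [Algebra.smul_def]; rfl
    rw [this]
    exact Submodule.smul_mem _ _ (Submodule.subset_span ⟨i, rfl⟩)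
  have h1 : (1 : M) ∈ V := by
    have := hz 1; rwa [map_one] at this
  have hmulc : ∀ i j, u i * u j ∈ V := by
    intro i j
    have : u i * u j = Θ (β i * β j) := by rw [map_mul]
    rw [this]; exact hz _
  obtain ⟨hmulV, hinvV⟩ := span_closed_mul_inv u h1 hmulc
  have hjT : ∀ t : T, algebraMap T M t ∈ V := by
    intro t
    induction t using TensorProduct.induction_on with
    | zero => rw [map_zero]; exact V.zero_mem
    | tmul l y =>
      rw [j_tmul]
      have : algebraMap L M l * Θ y =
          (⟨algebraMap L M l, IntermediateField.algebraMap_mem K l⟩ : ↥K) • Θ y := by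
        rw [Algebra.smul_def]; rfl
      rw [this]
      exact Submodule.smul_mem _ _ (hz y)
    | add s t hs ht => rw [map_add]; exact V.add_mem hs ht
  have htop : V = ⊤ := by
    rw [eq_top_iff]
    intro m _
    obtain ⟨t, s, hsnz, hts⟩ := IsFractionRing.div_surjective (A := T) m
    have hjs : algebraMap T M s ≠ 0 :=
      IsFractionRing.to_map_ne_zero_of_mem_nonZeroDivisors hsnz
    rw [← hts, div_eq_mul_inv]
    exact hmulV _ (hjT t) _ (hinvV _ (hjT s) hjs)
  have hfd' : FiniteDimensional ↥K M := finiteDimensional_of_span_top u htop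
  refine ⟨g, hgt, hfd', ?_⟩
  have h1' := finrank_span_le_card (R := ↥K) (M := M) (Set.range u)
  rw [← hV, htop, finrank_top] at h1'
  refine h1'.trans ?_
  rw [Set.toFinset_range]
  exact (Finset.card_image_le).trans (by simp)

lemma hard_direction [IsAlgClosed k] {x₀ : F} (hx₀ : Transcendental k x₀)
    (hx₀fin : FiniteDimensional (IntermediateField.adjoin k {x₀}) F)
    {g : M} (hg : Transcendental L g)
    (hgfin : FiniteDimensional (IntermediateField.adjoin L {g}) M) :
    ∃ f : F, Transcendental k f ∧ FiniteDimensional (IntermediateField.adjoin k {f}) F ∧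
      Module.finrank (IntermediateField.adjoin k {f}) F ≤
        Module.finrank (IntermediateField.adjoin L {g}) M := by
  classical
  set K := IntermediateField.adjoin L {g} with hK
  set d := Module.finrank ↥K M with hd
  set e : Module.Basis (Fin d) ↥K M := Module.finBasis ↥K M with he
  set j : T →+* M := algebraMap T M with hj
  have jinj : Function.Injective j := IsFractionRing.injective T M
  -- write g = j a / j b
  obtain ⟨a, b, hbnzd, hab⟩ := IsFractionRing.div_surjective (A := T) g
  have hjb : j b ≠ 0 := IsFractionRing.to_map_ne_zero_of_mem_nonZeroDivisors hbnzd
  have hga : g * j b = j a := by rw [← hab]; exact div_mul_cancel₀ _ hjb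
  -- spanning vectors in the image of T
  have hts : ∀ i : Fin d, ∃ t s : T, s ∈ nonZeroDivisors T ∧
      algebraMap T M t / algebraMap T M s = e i := fun i => by
    obtain ⟨t, s, hs, h⟩ := IsFractionRing.div_surjective (A := T) (e i)
    exact ⟨t, s, hs, h⟩
  choose tt ss hssnzd htsq using hts
  have hjss : ∀ i, j (ss i) ≠ 0 := fun i =>
    IsFractionRing.to_map_ne_zero_of_mem_nonZeroDivisors (hssnzd i)
  set w : Fin d → T := fun i => tt i * ∏ i' ∈ Finset.univ.erase i, ss i' with hw
  set P : M := ∏ i', j (ss i') with hP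
  have hPnz : P ≠ 0 := Finset.prod_ne_zero_iff.mpr fun i _ => hjss i
  have hjw : ∀ i, j (w i) = e i * P := by
    intro i
    rw [hw]
    simp only [map_mul, map_prod]
    rw [hP, ← Finset.mul_prod_erase Finset.univ (fun i' => j (ss i')) (Finset.mem_univ i),
      ← htsq i, div_mul_eq_mul_div, mul_comm (j (ss i)) _, ← mul_assoc, mul_div_assoc,
      div_self (hjss i), mul_one]
  have hspan : Submodule.span ↥K (Set.range fun i => j (w i)) = ⊤ := by
    have h1 : (fun i => j (w i)) = fun i => (LinearMap.mulLeft ↥K P) (e i) := by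
      funext i; rw [hjw i, LinearMap.mulLeft_apply, mul_comm]
    have h2 : (Set.range fun i => (LinearMap.mulLeft ↥K P) (e i)) =
        (LinearMap.mulLeft ↥K P) '' (Set.range e) := by rw [← Set.range_comp]; rfl
    rw [h1, h2, ← Submodule.map_span, Module.Basis.span_eq, Submodule.map_top, LinearMap.range_eq_top]
    intro m
    exact ⟨P⁻¹ * m, by rw [LinearMap.mulLeft_apply, ← mul_assoc, mul_inv_cancel₀ hPnz, one_mul]⟩
  -- write any coefficient vector with a common polynomial denominator
  have key1 : ∀ t : T, ∃ (q : L[X]) (p : Fin d → L[X]), aeval g q ≠ 0 ∧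
      j t * aeval g q = ∑ i, aeval g (p i) * j (w i) := by
    intro t
    have hmem : j t ∈ Submodule.span ↥K (Set.range fun i => j (w i)) := by
      rw [hspan]; trivial
    obtain ⟨c, hc⟩ := (Submodule.mem_span_range_iff_exists_fun ↥K).mp hmem
    obtain ⟨q, hq, hqp⟩ := exists_common_denominator (K := L) (E := M) hg Finset.univ c
    choose p hp using fun i => hqp i (Finset.mem_univ i)
    refine ⟨q, p, hq, ?_⟩
    rw [← hc, Finset.sum_mul]
    refine Finset.sum_congr rfl fun i _ => ?_
    rw [Algebra.smul_def, ← hp i]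
    have : algebraMap ↥K M (c i) = (c i : M) := rfl
    rw [this]; ring
  -- homogenization
  set HG : L[X] → ℕ → T := fun r N =>
    ∑ m ∈ Finset.range (N+1), algebraMap L T (r.coeff m) * a ^ m * b ^ (N - m) with hHGdef
  have hHG : ∀ (r : L[X]) (N : ℕ), r.natDegree ≤ N →
      j (HG r N) = aeval g r * (j b) ^ N := by
    intro r N hrN
    rw [hHGdef]
    show j (∑ m ∈ Finset.range (N+1), algebraMap L T (r.coeff m) * a ^ m * b ^ (N - m)) = _
    rw [map_sum]
    have hterm : ∀ m ∈ Finset.range (N+1),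
        j (algebraMap L T (r.coeff m) * a ^ m * b ^ (N - m)) =
          (algebraMap L M (r.coeff m) * g ^ m) * (j b) ^ N := by
      intro m hm
      have hmN : m ≤ N := Nat.lt_succ_iff.mp (Finset.mem_range.mp hm)
      rw [map_mul, map_mul, map_pow, map_pow, ← hga, ← IsScalarTower.algebraMap_apply L T M,
        mul_pow]
      ring_nf
      rw [mul_assoc, pow_mul_pow_sub _ hmN]
    rw [Finset.sum_congr rfl hterm, ← Finset.sum_mul]
    congr 1
    rw [aeval_eq_sum_range' (Nat.lt_succ_of_le hrN) g]
    exact Finset.sum_congr rfl fun m _ => by rw [Algebra.smul_def]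
  -- T-level homogeneous identities
  have key2 : ∀ t : T, ∃ (N : ℕ) (q : L[X]) (p : Fin d → L[X]), aeval g q ≠ 0 ∧
      q.natDegree ≤ N ∧ (∀ i, (p i).natDegree ≤ N) ∧
      t * HG q N = ∑ i, HG (p i) N * w i := by
    intro t
    obtain ⟨q, p, hq, hiden⟩ := key1 t
    set N := max q.natDegree (Finset.univ.sup fun i => (p i).natDegree) with hN
    have hpN : ∀ i, (p i).natDegree ≤ N := fun i =>
      le_trans (Finset.le_sup (f := fun i => (p i).natDegree) (Finset.mem_univ i))
        (le_max_right _ _)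
    refine ⟨N, q, p, hq, le_max_left _ _, hpN, ?_⟩
    apply jinj
    rw [map_mul, hHG q N (le_max_left _ _), map_sum]
    have hterm2 : ∀ i ∈ Finset.univ, j (HG (p i) N * w i) =
        (aeval g (p i) * (j b) ^ N) * j (w i) := by
      intro i _
      rw [map_mul, hHG (p i) N (hpN i)]
    rw [Finset.sum_congr rfl hterm2]
    calc j t * (aeval g q * (j b) ^ N)
        = (j t * aeval g q) * (j b) ^ N := by ring
      _ = (∑ i, aeval g (p i) * j (w i)) * (j b) ^ N := by rw [hiden]
      _ = ∑ i, (aeval g (p i) * (j b) ^ N) * j (w i) := by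
          rw [Finset.sum_mul]
          exact Finset.sum_congr rfl fun i _ => by ring
  -- generators of F over k(x₀)
  obtain ⟨nF, mF, hmF⟩ := Module.Finite.exists_fin
    (R := ↥(IntermediateField.adjoin k {x₀})) (M := F)
  -- index type and target elements of T
  set tI : ((Unit ⊕ (Unit ⊕ Fin nF)) ⊕ (Fin d × Fin d)) → T := fun i => match i with
    | .inl (.inl _) => 1
    | .inl (.inr (.inl _)) => (1 : L) ⊗ₜ[k] x₀
    | .inl (.inr (.inr i')) => (1 : L) ⊗ₜ[k] mF i'
    | .inr (i', j') => w i' * w j' with htI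
  choose NN QQ PP hQQnz hQQdeg hPPdeg hID using fun i => key2 (tI i)
  -- tensor component data
  choose rep hrep using fun t : T => TensorProduct.exists_finset (R := k) (M := L) (N := F) t
  set Cf : L[X] → Set L := fun r => ↑(r.support.image r.coeff) with hCf
  set S : Set L := ((⋃ i : Fin d, ↑((rep (w i)).image Prod.fst)) ∪
      (↑((rep a).image Prod.fst) ∪ ↑((rep b).image Prod.fst))) ∪
      ((⋃ i, Cf (QQ i)) ∪ (⋃ i, ⋃ i' : Fin d, Cf (PP i i'))) with hS
  have hSfin : S.Finite := by
    refine Set.Finite.union (Set.Finite.union ?_ (Set.Finite.union ?_ ?_))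
      (Set.Finite.union ?_ ?_)
    · exact Set.finite_iUnion fun i => Finset.finite_toSet _
    · exact Finset.finite_toSet _
    · exact Finset.finite_toSet _
    · exact Set.finite_iUnion fun i => Finset.finite_toSet _
    · exact Set.finite_iUnion fun i => Set.finite_iUnion fun i' => Finset.finite_toSet _
  set sEnum := hSfin.toFinset with hsEnum
  set nA := sEnum.card with hnA
  set v : Fin nA → L := fun i => (sEnum.equivFin.symm i : L) with hv
  have hrangev : Set.range v = S := by
    rw [hv]
    have h1 : Set.range (fun i : Fin nA => ((sEnum.equivFin.symm i : sEnum) : L)) =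
        Subtype.val '' (Set.range (sEnum.equivFin.symm)) := by rw [← Set.range_comp]; rfl
    rw [h1, Equiv.range_eq_univ, Set.image_univ, Subtype.range_coe]
    exact hSfin.coe_toFinset
  set A : Subalgebra k L := Algebra.adjoin k (Set.range v) with hA
  have hSA : ∀ l ∈ S, l ∈ A := fun l hl => Algebra.subset_adjoin (hrangev ▸ hl)
  have hAeq : A = (MvPolynomial.aeval v).range := Algebra.adjoin_range_eq_range_aeval k v
  set π : MvPolynomial (Fin nA) k →ₐ[k] ↥A :=
    (Subalgebra.equivOfEq _ _ hAeq.symm).toAlgHom.comp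
      (MvPolynomial.aeval v).rangeRestrict with hπ
  have hπs : Function.Surjective π := (Subalgebra.equivOfEq _ _ hAeq.symm).surjective.comp
    (AlgHom.rangeRestrict_surjective _)
  -- the tensor algebra over A and its injection into T
  set ABmap : TensorProduct k ↥A F →ₐ[k] T :=
    Algebra.TensorProduct.map A.val (AlgHom.id k F) with hABmap
  have hABinj : Function.Injective ABmap := by
    have heq : ABmap.toLinearMap = LinearMap.rTensor F A.val.toLinearMap := by
      apply TensorProduct.ext'; intro x y; simp [hABmap]
    have hval : Function.Injective A.val.toLinearMap := Subtype.val_injective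
    have h2 := Module.Flat.rTensor_preserves_injective_linearMap (M := F)
      A.val.toLinearMap hval
    rw [← heq] at h2; exact h2
  -- preimages of elements with components in A
  have hpre : ∀ t : T, (∀ l ∈ (rep t).image Prod.fst, l ∈ A) →
      ∃ t', ABmap t' = t := by
    intro t hcomp
    refine ⟨∑ pr ∈ (rep t).attach,
      (⟨pr.1.1, hcomp _ (Finset.mem_image_of_mem Prod.fst pr.2)⟩ : ↥A) ⊗ₜ[k] pr.1.2, ?_⟩
    rw [map_sum]
    conv_rhs => rw [hrep t, ← Finset.sum_attach (rep t) (fun pr => pr.1 ⊗ₜ[k] pr.2)]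
    exact Finset.sum_congr rfl fun pr _ => by
      rw [hABmap, Algebra.TensorProduct.map_tmul]; rfl
  obtain ⟨ta, hta⟩ := hpre a fun l hl => hSA l (by
    rw [hS]; exact Or.inl (Or.inr (Or.inl hl)))
  obtain ⟨tb, htb⟩ := hpre b fun l hl => hSA l (by
    rw [hS]; exact Or.inl (Or.inr (Or.inr hl)))
  have hws : ∀ i : Fin d, ∃ t', ABmap t' = w i := fun i => hpre (w i) fun l hl => hSA l (by
    rw [hS]; exact Or.inl (Or.inl (Set.mem_iUnion.mpr ⟨i, hl⟩)))
  choose tw htw using hws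
  have hQA : ∀ i m, (QQ i).coeff m ∈ A := by
    intro i m
    by_cases hm : m ∈ (QQ i).support
    · exact hSA _ (by
        rw [hS]
        exact Or.inr (Or.inl (Set.mem_iUnion.mpr ⟨i, Finset.mem_image_of_mem _ hm⟩)))
    · rw [Polynomial.notMem_support_iff.mp hm]; exact A.zero_mem
  have hPA : ∀ i i' m, (PP i i').coeff m ∈ A := by
    intro i i' m
    by_cases hm : m ∈ (PP i i').support
    · exact hSA _ (by
        rw [hS]
        exact Or.inr (Or.inr (Set.mem_iUnion.mpr ⟨i, Set.mem_iUnion.mpr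
          ⟨i', Finset.mem_image_of_mem _ hm⟩⟩)))
    · rw [Polynomial.notMem_support_iff.mp hm]; exact A.zero_mem
  -- coordinates with respect to a basis of F
  set bF := Module.Basis.ofVectorSpace k F with hbF
  set basT := Algebra.TensorProduct.basis L bF with hbasT
  have hcoordA : ∀ (t' : TensorProduct k ↥A F) β, basT.repr (ABmap t') β ∈ A := by
    intro t' β
    induction t' using TensorProduct.induction_on with
    | zero => rw [map_zero, map_zero, Finsupp.zero_apply]; exact A.zero_mem
    | tmul α y =>
      rw [hABmap, Algebra.TensorProduct.map_tmul, hbasT,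
        Algebra.TensorProduct.basis_repr_tmul, Finsupp.smul_apply, Finsupp.mapRange_apply,
        smul_eq_mul]
      exact A.mul_mem α.2 (A.algebraMap_mem _)
    | add u1 u2 hu1 hu2 =>
      rw [map_add, map_add, Finsupp.add_apply]; exact A.add_mem hu1 hu2
  -- a and b are not proportional over L
  have hbne : b ≠ 0 := nonZeroDivisors.ne_zero hbnzd
  have hnotprop : ∀ l : L, a ≠ l • b := by
    intro l hal
    apply hg
    have hgl : g = algebraMap L M l := by
      rw [← hab, hal]
      have h1 : ((l • b : T)) = algebraMap L T l * b := by rw [Algebra.smul_def]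
      rw [h1, map_mul, ← IsScalarTower.algebraMap_apply L T M, mul_div_assoc,
        div_self hjb, mul_one]
    rw [hgl]
    exact isAlgebraic_algebraMap l
  set ca := basT.repr a with hca
  set cb := basT.repr b with hcb
  have hminor : ∃ β γ, ca β * cb γ - ca γ * cb β ≠ 0 := by
    by_contra hallz
    push_neg at hallz
    have hcb0 : cb ≠ 0 := fun h0 => hbne (basT.repr.injective (by rw [← hcb, h0, map_zero]))
    obtain ⟨γ₀, hγ₀⟩ : ∃ γ₀, cb γ₀ ≠ 0 := by
      by_contra hall
      push_neg at hall
      exact hcb0 (Finsupp.ext hall)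
    apply hnotprop (ca γ₀ * (cb γ₀)⁻¹)
    apply basT.repr.injective
    rw [map_smul, ← hca, ← hcb]
    ext β
    rw [Finsupp.smul_apply, smul_eq_mul]
    have h2 : ca β * cb γ₀ = ca γ₀ * cb β := sub_eq_zero.mp (hallz β γ₀)
    field_simp
    linear_combination h2
  obtain ⟨β₀, γ₀m, hm0⟩ := hminor
  have hcaA : ∀ β, ca β ∈ A := fun β => by rw [hca, ← hta]; exact hcoordA ta β
  have hcbA : ∀ β, cb β ∈ A := fun β => by rw [hcb, ← htb]; exact hcoordA tb β
  set ν : ↥A := ⟨ca β₀ * cb γ₀m - ca γ₀m * cb β₀,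
    A.sub_mem (A.mul_mem (hcaA _) (hcbA _)) (A.mul_mem (hcaA _) (hcbA _))⟩ with hν
  have hνnz : ν ≠ 0 := fun h => hm0 (by simpa [hν, Subtype.ext_iff] using h)
  set σσ : ↥A := ν * ∏ i, (⟨(QQ i).coeff (QQ i).natDegree, hQA i _⟩ : ↥A) with hσσ
  have hQQne0 : ∀ i, QQ i ≠ 0 := fun i h0 => hQQnz i (by rw [h0, map_zero])
  have hσσnz : σσ ≠ 0 := by
    rw [hσσ]
    refine mul_ne_zero hνnz (Finset.prod_ne_zero_iff.mpr fun i _ h0 => ?_)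
    exact (Polynomial.leadingCoeff_ne_zero.mpr (hQQne0 i)) (by
      rw [Polynomial.leadingCoeff]
      simpa using Subtype.ext_iff.mp h0)
  obtain ⟨φ, hφ⟩ := exists_algHom_ne_zero π hπs σσ hσσnz
  have hφsplit := hφ
  rw [hσσ, map_mul, map_prod] at hφsplit
  have hφν : φ ν ≠ 0 := left_ne_zero_of_mul hφsplit
  have hφQ : ∀ i, φ ⟨(QQ i).coeff (QQ i).natDegree, hQA i _⟩ ≠ 0 := fun i =>
    Finset.prod_ne_zero_iff.mp (right_ne_zero_of_mul hφsplit) i (Finset.mem_univ i)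
  set φF : ↥A →ₐ[k] F := (Algebra.ofId k F).comp φ with hφF
  set Φ : TensorProduct k ↥A F →ₐ[k] F :=
    Algebra.TensorProduct.lift φF (AlgHom.id k F) (fun x y => Commute.all _ _) with hΦ
  have hΦcoord : ∀ (t' : TensorProduct k ↥A F) (β) (hmem : basT.repr (ABmap t') β ∈ A),
      bF.repr (Φ t') β = φ ⟨basT.repr (ABmap t') β, hmem⟩ := by
    intro t'
    induction t' using TensorProduct.induction_on with
    | zero =>
      intro β hmem
      have hval : (⟨basT.repr (ABmap (0 : TensorProduct k ↥A F)) β, hmem⟩ : ↥A) = 0 :=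
        Subtype.ext (by
          show basT.repr (ABmap (0 : TensorProduct k ↥A F)) β = (0 : L)
          rw [map_zero, map_zero, Finsupp.zero_apply])
      rw [hval, map_zero, map_zero, map_zero, Finsupp.zero_apply]
    | tmul α y =>
      intro β hmem
      have hval : (⟨basT.repr (ABmap (α ⊗ₜ[k] y)) β, hmem⟩ : ↥A) =
          α * algebraMap k ↥A (bF.repr y β) := Subtype.ext (by
        show basT.repr (ABmap (α ⊗ₜ[k] y)) β = ((α : L) * algebraMap k L (bF.repr y β))
        rw [hABmap, Algebra.TensorProduct.map_tmul, hbasT,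
          Algebra.TensorProduct.basis_repr_tmul, Finsupp.smul_apply, Finsupp.mapRange_apply,
          smul_eq_mul]
        rfl)
      rw [hval, map_mul, AlgHom.commutes, Algebra.algebraMap_self, RingHom.id_apply]
      have hΦt : Φ (α ⊗ₜ[k] y) = algebraMap k F (φ α) * y := by
        rw [hΦ, Algebra.TensorProduct.lift_tmul]; rfl
      rw [hΦt, ← Algebra.smul_def, map_smul, Finsupp.smul_apply, smul_eq_mul]
    | add u1 u2 h1 h2 =>
      intro β hmem
      have hm1 : basT.repr (ABmap u1) β ∈ A := hcoordA u1 β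
      have hm2 : basT.repr (ABmap u2) β ∈ A := hcoordA u2 β
      have hval : (⟨basT.repr (ABmap (u1 + u2)) β, hmem⟩ : ↥A) =
          ⟨basT.repr (ABmap u1) β, hm1⟩ + ⟨basT.repr (ABmap u2) β, hm2⟩ := Subtype.ext (by
        show basT.repr (ABmap (u1 + u2)) β = basT.repr (ABmap u1) β + basT.repr (ABmap u2) β
        rw [map_add, map_add, Finsupp.add_apply])
      rw [hval, map_add, map_add, map_add, Finsupp.add_apply, h1 β hm1, h2 β hm2]
  set fa : F := Φ ta with hfa
  set fb : F := Φ tb with hfbdef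
  have hfacoord : ∀ β, bF.repr fa β = φ ⟨ca β, hcaA β⟩ := by
    intro β
    rw [hfa, hΦcoord ta β (hcoordA ta β)]
    exact congrArg φ (Subtype.ext (by
      show basT.repr (ABmap ta) β = ca β
      rw [hta, hca]))
  have hfbcoord : ∀ β, bF.repr fb β = φ ⟨cb β, hcbA β⟩ := by
    intro β
    rw [hfbdef, hΦcoord tb β (hcoordA tb β)]
    exact congrArg φ (Subtype.ext (by
      show basT.repr (ABmap tb) β = cb β
      rw [htb, hcb]))
  have hνsplit : φ ν = φ ⟨ca β₀, hcaA β₀⟩ * φ ⟨cb γ₀m, hcbA γ₀m⟩ -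
      φ ⟨ca γ₀m, hcaA γ₀m⟩ * φ ⟨cb β₀, hcbA β₀⟩ := by
    rw [hν]
    have : (⟨ca β₀ * cb γ₀m - ca γ₀m * cb β₀, _⟩ : ↥A) =
        ⟨ca β₀, hcaA β₀⟩ * ⟨cb γ₀m, hcbA γ₀m⟩ - ⟨ca γ₀m, hcaA γ₀m⟩ * ⟨cb β₀, hcbA β₀⟩ :=
      Subtype.ext rfl
    rw [this, map_sub, map_mul, map_mul]
  have hfb0 : fb ≠ 0 := by
    intro h0
    apply hφν
    rw [hνsplit, ← hfbcoord, ← hfbcoord, h0]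
    simp
  set f : F := fa / fb with hfdef
  have hfa_eq : fa = f * fb := by rw [hfdef, div_mul_cancel₀ _ hfb0]
  have hft : Transcendental k f := by
    intro halg
    have hfi : IsIntegral k f := halg.isIntegral
    have hdeg := IsAlgClosed.degree_eq_one_of_irreducible k (minpoly.irreducible hfi)
    obtain ⟨c, hc⟩ := minpoly.natDegree_eq_one_iff.mp
      (Polynomial.natDegree_eq_of_degree_eq_some hdeg)
    apply hφν
    have hfa2 : fa = algebraMap k F c * fb := by rw [hfa_eq, ← hc]
    have hcoords : ∀ β, φ ⟨ca β, hcaA β⟩ = c * φ ⟨cb β, hcbA β⟩ := by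
      intro β
      rw [← hfacoord β, ← hfbcoord β, hfa2, ← Algebra.smul_def, map_smul,
        Finsupp.smul_apply, smul_eq_mul]
    rw [hνsplit, hcoords β₀, hcoords γ₀m]
    ring
  -- homogenized elements upstairs in A ⊗ F
  set HGB : (ℕ → ↥A) → ℕ → TensorProduct k ↥A F := fun c N =>
    ∑ m ∈ Finset.range (N+1), algebraMap ↥A _ (c m) * ta ^ m * tb ^ (N - m) with hHGBdef
  set cQ : _ → ℕ → ↥A := fun i m => (⟨(QQ i).coeff m, hQA i m⟩ : ↥A) with hcQ
  set cP : _ → Fin d → ℕ → ↥A := fun i i' m => (⟨(PP i i').coeff m, hPA i i' m⟩ : ↥A) with hcP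
  have hABalg : ∀ α : ↥A, ABmap (algebraMap ↥A (TensorProduct k ↥A F) α) =
      algebraMap L T (α : L) := by
    intro α
    rw [Algebra.TensorProduct.algebraMap_apply, hABmap, Algebra.TensorProduct.map_tmul,
      map_one, Algebra.TensorProduct.algebraMap_apply]
    rfl
  have hABHGB : ∀ (c : ℕ → ↥A) (r : L[X]) (N : ℕ), (∀ m, (c m : L) = r.coeff m) →
      ABmap (HGB c N) = HG r N := by
    intro c r N hcr
    rw [hHGBdef]
    show ABmap (∑ m ∈ Finset.range (N+1),
      algebraMap ↥A _ (c m) * ta ^ m * tb ^ (N - m)) = HG r N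
    rw [map_sum, hHGdef]
    show _ = ∑ m ∈ Finset.range (N+1), algebraMap L T (r.coeff m) * a ^ m * b ^ (N - m)
    refine Finset.sum_congr rfl fun m _ => ?_
    rw [map_mul, map_mul, map_pow, map_pow, hta, htb, hABalg, hcr m]
  -- upstairs targets
  set tBI : ((Unit ⊕ (Unit ⊕ Fin nF)) ⊕ (Fin d × Fin d)) → TensorProduct k ↥A F :=
    fun i => match i with
    | .inl (.inl _) => 1
    | .inl (.inr (.inl _)) => (1 : ↥A) ⊗ₜ[k] x₀
    | .inl (.inr (.inr i')) => (1 : ↥A) ⊗ₜ[k] mF i'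
    | .inr (i', j') => tw i' * tw j' with htBI
  have hABtBI : ∀ i, ABmap (tBI i) = tI i := by
    intro i
    match i with
    | .inl (.inl _) => rw [htBI, htI]; exact map_one _
    | .inl (.inr (.inl _)) =>
      rw [htBI, htI]
      show ABmap ((1 : ↥A) ⊗ₜ[k] x₀) = (1 : L) ⊗ₜ[k] x₀
      rw [hABmap, Algebra.TensorProduct.map_tmul, map_one]
      rfl
    | .inl (.inr (.inr i')) =>
      rw [htBI, htI]
      show ABmap ((1 : ↥A) ⊗ₜ[k] mF i') = (1 : L) ⊗ₜ[k] mF i'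
      rw [hABmap, Algebra.TensorProduct.map_tmul, map_one]
      rfl
    | .inr (i', j') =>
      rw [htBI, htI]
      show ABmap (tw i' * tw j') = w i' * w j'
      rw [map_mul, htw, htw]
  -- the identities upstairs
  have hBid : ∀ i, tBI i * HGB (cQ i) (NN i) = ∑ i', HGB (cP i i') (NN i) * tw i' := by
    intro i
    apply hABinj
    rw [map_mul, hABtBI i, hABHGB (cQ i) (QQ i) (NN i) (fun m => rfl), hID i, map_sum]
    refine Finset.sum_congr rfl fun i' _ => ?_
    rw [map_mul, hABHGB (cP i i') (PP i i') (NN i) (fun m => rfl), htw]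
  -- applying Φ
  have hΦalg : ∀ α : ↥A, Φ (algebraMap ↥A (TensorProduct k ↥A F) α) =
      algebraMap k F (φ α) := by
    intro α
    rw [Algebra.TensorProduct.algebraMap_apply, hΦ, Algebra.TensorProduct.lift_tmul, map_one,
      mul_one, hφF]
    rfl
  set Pol : (ℕ → ↥A) → ℕ → k[X] := fun c N =>
    ∑ m ∈ Finset.range (N+1), Polynomial.C (φ (c m)) * Polynomial.X ^ m with hPoldef
  have hΦHGB : ∀ (c : ℕ → ↥A) (N : ℕ), Φ (HGB c N) = aeval f (Pol c N) * fb ^ N := by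
    intro c N
    rw [hHGBdef]
    show Φ (∑ m ∈ Finset.range (N+1),
      algebraMap ↥A _ (c m) * ta ^ m * tb ^ (N - m)) = _
    rw [map_sum]
    have hterm : ∀ m ∈ Finset.range (N+1),
        Φ (algebraMap ↥A _ (c m) * ta ^ m * tb ^ (N-m)) =
          (algebraMap k F (φ (c m)) * f ^ m) * fb ^ N := by
      intro m hm
      have hmN : m ≤ N := Nat.lt_succ_iff.mp (Finset.mem_range.mp hm)
      rw [map_mul, map_mul, map_pow, map_pow, hΦalg, ← hfa, ← hfbdef, hfa_eq]
      calc algebraMap k F (φ (c m)) * (f * fb) ^ m * fb ^ (N - m)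
          = (algebraMap k F (φ (c m)) * f ^ m) * (fb ^ m * fb ^ (N - m)) := by
            rw [mul_pow]; ring
        _ = (algebraMap k F (φ (c m)) * f ^ m) * fb ^ N := by
            rw [pow_mul_pow_sub _ hmN]
    rw [Finset.sum_congr rfl hterm, ← Finset.sum_mul]
    congr 1
    rw [hPoldef]
    show ∑ m ∈ Finset.range (N+1), algebraMap k F (φ (c m)) * f ^ m =
      aeval f (∑ m ∈ Finset.range (N+1), Polynomial.C (φ (c m)) * Polynomial.X ^ m)
    rw [map_sum]
    exact Finset.sum_congr rfl fun m _ => by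
      rw [map_mul, Polynomial.aeval_C, map_pow, Polynomial.aeval_X]
  have hPolQne : ∀ i, aeval f (Pol (cQ i) (NN i)) ≠ 0 := by
    intro i
    apply aeval_ne_zero_of_transcendental hft
    intro h0
    apply hφQ i
    have hdegmem : (QQ i).natDegree ∈ Finset.range (NN i + 1) :=
      Finset.mem_range.mpr (Nat.lt_succ_of_le (hQQdeg i))
    rw [hPoldef] at h0
    have h0' := congrArg (fun r => Polynomial.coeff r ((QQ i).natDegree)) h0
    simp only [Polynomial.coeff_zero] at h0'
    rw [coeff_sum_C_mul_X_pow (fun m => φ (cQ i m)) hdegmem] at h0'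
    exact h0'
  -- the span
  set uu : Fin d → F := fun i' => Φ (tw i') with huu
  set K₀ := IntermediateField.adjoin k {f} with hK₀
  set V := Submodule.span ↥K₀ (Set.range uu) with hV
  have hrel : ∀ i, Φ (tBI i) ∈ V := by
    intro i
    have h1 := congrArg Φ (hBid i)
    rw [map_mul, hΦHGB] at h1
    conv at h1 => rhs; rw [map_sum]
    have h2 : ∀ i' ∈ Finset.univ, Φ (HGB (cP i i') (NN i) * tw i') =
        (aeval f (Pol (cP i i') (NN i)) * uu i') * fb ^ (NN i) := by
      intro i' _
      rw [map_mul, hΦHGB]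
      show aeval f (Pol (cP i i') (NN i)) * fb ^ (NN i) * Φ (tw i') = _
      rw [huu]
      ring
    rw [Finset.sum_congr rfl h2] at h1
    have h3 : (Φ (tBI i) * aeval f (Pol (cQ i) (NN i))) * fb ^ (NN i) =
        (∑ i', aeval f (Pol (cP i i') (NN i)) * uu i') * fb ^ (NN i) := by
      rw [Finset.sum_mul, ← h1]; ring
    have h4 := mul_right_cancel₀ (pow_ne_zero _ hfb0) h3
    have h5 : Φ (tBI i) = ∑ i',
        (aeval f (Pol (cP i i') (NN i)) / aeval f (Pol (cQ i) (NN i))) * uu i' := by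
      have h6 : Φ (tBI i) = (∑ i', aeval f (Pol (cP i i') (NN i)) * uu i') /
          aeval f (Pol (cQ i) (NN i)) := by
        rw [← h4, mul_div_assoc, div_self (hPolQne i), mul_one]
      rw [h6, Finset.sum_div]
      exact Finset.sum_congr rfl fun i' _ => by ring
    rw [h5]
    refine Submodule.sum_mem _ fun i' _ => ?_
    have hsc : (aeval f (Pol (cP i i') (NN i)) / aeval f (Pol (cQ i) (NN i))) ∈ K₀ :=
      div_mem (aeval_mem_adjoin_simple f _) (aeval_mem_adjoin_simple f _)
    have : (aeval f (Pol (cP i i') (NN i)) / aeval f (Pol (cQ i) (NN i))) * uu i' =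
        (⟨_, hsc⟩ : ↥K₀) • uu i' := by rw [Algebra.smul_def]; rfl
    rw [this]
    exact Submodule.smul_mem _ _ (Submodule.subset_span ⟨i', rfl⟩)
  have h1V : (1 : F) ∈ V := by
    have := hrel (Sum.inl (Sum.inl ()))
    rwa [htBI, map_one] at this
  have htens : ∀ y : F, Φ ((1 : ↥A) ⊗ₜ[k] y) = y := by
    intro y
    rw [hΦ, Algebra.TensorProduct.lift_tmul, map_one, one_mul]
    rfl
  have hx₀V : x₀ ∈ V := by
    have := hrel (Sum.inl (Sum.inr (Sum.inl ())))
    rwa [htBI, htens x₀] at this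
  have hmFV : ∀ i', mF i' ∈ V := by
    intro i'
    have := hrel (Sum.inl (Sum.inr (Sum.inr i')))
    rwa [htBI, htens (mF i')] at this
  have hmulV' : ∀ i' j', uu i' * uu j' ∈ V := by
    intro i' j'
    have := hrel (Sum.inr (i', j'))
    rwa [htBI, map_mul] at this
  obtain ⟨hmulV, hinvV⟩ := span_closed_mul_inv uu h1V hmulV'
  have haevalV : ∀ r : k[X], aeval x₀ r ∈ V := by
    intro r
    induction r using Polynomial.induction_on' with
    | add p q hp hq => rw [map_add]; exact V.add_mem hp hq
    | monomial n c =>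
      rw [Polynomial.aeval_monomial]
      have hpow : x₀ ^ n ∈ V := by
        induction n with
        | zero => rw [pow_zero]; exact h1V
        | succ n ih => rw [pow_succ]; exact hmulV _ ih _ hx₀V
      have hsm : algebraMap k F c * x₀ ^ n = (algebraMap k ↥K₀ c) • (x₀ ^ n) := by
        rw [Algebra.smul_def, ← IsScalarTower.algebraMap_apply k ↥K₀ F]
      rw [hsm]
      exact V.smul_mem _ hpow
  have hK₀xV : ∀ c : ↥(IntermediateField.adjoin k {x₀}), (c : F) ∈ V := by
    intro c
    obtain ⟨r, s, hrs⟩ := (IntermediateField.mem_adjoin_simple_iff k ((c : F))).mp c.2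
    rw [hrs]
    by_cases hs0 : aeval x₀ s = 0
    · rw [hs0, div_zero]; exact V.zero_mem
    · rw [div_eq_mul_inv]; exact hmulV _ (haevalV r) _ (hinvV _ (haevalV s) hs0)
  have htopV : ∀ y : F, y ∈ V := by
    have key : ∀ y ∈ Submodule.span ↥(IntermediateField.adjoin k {x₀}) (Set.range mF),
        y ∈ V := by
      intro y hy
      induction hy using Submodule.span_induction with
      | mem z hz => obtain ⟨i', rfl⟩ := hz; exact hmFV i'
      | zero => exact V.zero_mem
      | add a' b' _ _ ha hb => exact V.add_mem ha hb
      | smul c z _ hz =>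
        have : c • z = (c : F) * z := by rw [Algebra.smul_def]; rfl
        rw [this]
        exact hmulV _ (hK₀xV c) _ hz
    exact fun y => key y (hmF ▸ Submodule.mem_top)
  have htop : V = ⊤ := eq_top_iff.mpr fun y _ => htopV y
  refine ⟨f, hft, finiteDimensional_of_span_top uu (hV ▸ htop), ?_⟩
  have h1' := finrank_span_le_card (R := ↥K₀) (M := F) (Set.range uu)
  rw [← hV, htop, finrank_top] at h1'
  have h2' : Module.finrank ↥K₀ F ≤ d := by
    refine h1'.trans ?_
    rw [Set.toFinset_range]
    exact (Finset.card_image_le).trans (by simp)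
  exact h2'

end BaseChange

/-- if `X` is a geometrically integral curve over an algebraically closed field
`k` with function field `F`, and `L/k` is any field extension, then `γ_L(X) = γ_k(X)`.
The function field of `X_L = X ×_k L` is the fraction field of `L ⊗_k F` (a domain, since
`k` is algebraically closed and `X` is integral). -/
theorem gonality_baseChange_eq_of_isAlgClosed
    (k F L : Type*) [Field k] [IsAlgClosed k] [Field F] [Algebra k F] [Field L] [Algebra k L]
    (hF : IsFunctionField k F)
    [IsDomain (TensorProduct k L F)] :
    letI : Algebra L (FractionRing (TensorProduct k L F)) :=
      ((algebraMap (TensorProduct k L F) (FractionRing (TensorProduct k L F))).comp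
        (algebraMap L (TensorProduct k L F))).toAlgebra
    gonality L (FractionRing (TensorProduct k L F)) = gonality k F := by
  letI : Algebra L (FractionRing (TensorProduct k L F)) :=
    ((algebraMap (TensorProduct k L F) (FractionRing (TensorProduct k L F))).comp
      (algebraMap L (TensorProduct k L F))).toAlgebra
  show gonality L (FractionRing (TensorProduct k L F)) = gonality k F
  letI : Algebra k (FractionRing (TensorProduct k L F)) :=
    ((algebraMap L (FractionRing (TensorProduct k L F))).comp (algebraMap k L)).toAlgebra
  haveI tw1 : @IsScalarTower L (TensorProduct k L F) (FractionRing (TensorProduct k L F))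
      Algebra.toSMul Algebra.toSMul Algebra.toSMul :=
    IsScalarTower.of_algebraMap_eq fun l => rfl
  haveI tw2 : @IsScalarTower k L (FractionRing (TensorProduct k L F))
      Algebra.toSMul Algebra.toSMul Algebra.toSMul :=
    IsScalarTower.of_algebraMap_eq fun c => rfl
  haveI tw3 : @IsScalarTower k (TensorProduct k L F) (FractionRing (TensorProduct k L F))
      Algebra.toSMul Algebra.toSMul Algebra.toSMul :=
    IsScalarTower.of_algebraMap_eq fun c => by
      rw [IsScalarTower.algebraMap_apply k L (TensorProduct k L F)]
      rfl
  obtain ⟨x₀, hx₀, hx₀fin⟩ := hF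
  unfold gonality
  apply le_antisymm
  · have hSKne : {d : ℕ | ∃ f : F, Transcendental k f ∧
        Module.finrank (IntermediateField.adjoin k {f}) F = d}.Nonempty :=
      ⟨_, x₀, hx₀, rfl⟩
    obtain ⟨f, hf, hfr⟩ := Nat.sInf_mem hSKne
    haveI hfd := finiteDimensional_adjoin_of_transcendental hx₀ hx₀fin hf
    obtain ⟨g, hgt, hgfd, hgle⟩ :=
      easy_direction (M := FractionRing (TensorProduct k L F)) (L := L) hf hfd
    exact le_trans (Nat.sInf_le ⟨g, hgt, rfl⟩) (by rw [← hfr]; exact hgle)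
  · obtain ⟨g₀, hg₀t, hg₀fd, _⟩ :=
      easy_direction (M := FractionRing (TensorProduct k L F)) (L := L) hx₀ hx₀fin
    have hSLne : {d : ℕ | ∃ g : FractionRing (TensorProduct k L F), Transcendental L g ∧
        Module.finrank (IntermediateField.adjoin L {g})
          (FractionRing (TensorProduct k L F)) = d}.Nonempty :=
      ⟨_, g₀, hg₀t, rfl⟩
    obtain ⟨g, hgt, hgr⟩ := Nat.sInf_mem hSLne
    haveI hgfd : FiniteDimensional (IntermediateField.adjoin L {g})
        (FractionRing (TensorProduct k L F)) :=
      finiteDimensional_adjoin_of_transcendental hg₀t hg₀fd hgt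
    obtain ⟨f, hft, hffd, hfle⟩ := hard_direction hx₀ hx₀fin hgt hgfd
    exact le_trans (Nat.sInf_le ⟨f, hft, rfl⟩) (by rw [← hgr]; exact hfle)

end Rest
end

section
/- Fix a prime p and let B be a positive integer. Any open subgroup H of the profinite group S_{≠p} := ∏_{ℓ prime, ℓ ≠ p} SL_2(Z_ℓ) of index at most B contains the subgroup ∏_{ℓ ≤ B!, ℓ ≠ p} {1} × ∏_{ℓ > B!, ℓ ≠ p} SL_2(Z_ℓ); that is, H contains the factor SL_2(Z_ℓ) (embedded in the obvious way) for every prime ℓ ≠ p with ℓ > B!. -/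
open Matrix

section SL2
variable {R : Type*} [CommRing R]

/-- Upper elementary matrix in `SL₂`. -/
def elU (t : R) : Matrix.SpecialLinearGroup (Fin 2) R :=
  ⟨!![1, t; 0, 1], by simp [Matrix.det_fin_two_of]⟩

/-- Lower elementary matrix in `SL₂`. -/
def elL (t : R) : Matrix.SpecialLinearGroup (Fin 2) R :=
  ⟨!![1, 0; t, 1], by simp [Matrix.det_fin_two_of]⟩

lemma elU_mul (s t : R) : elU s * elU t = elU (s + t) := by
  apply Subtype.ext
  show (!![1, s; 0, 1] : Matrix (Fin 2) (Fin 2) R) * !![1, t; 0, 1] = !![1, s + t; 0, 1]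
  rw [Matrix.mul_fin_two]
  congr 1 <;> ring

lemma elL_mul (s t : R) : elL s * elL t = elL (s + t) := by
  apply Subtype.ext
  show (!![1, 0; s, 1] : Matrix (Fin 2) (Fin 2) R) * !![1, 0; t, 1] = !![1, 0; s + t, 1]
  rw [Matrix.mul_fin_two]
  congr 1 <;> ring

lemma elU_zero : (elU (0 : R)) = 1 := by
  apply Subtype.ext
  show (!![1, 0; 0, 1] : Matrix (Fin 2) (Fin 2) R) = 1
  rw [Matrix.one_fin_two]

lemma elL_zero : (elL (0 : R)) = 1 := by
  apply Subtype.ext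
  show (!![1, 0; 0, 1] : Matrix (Fin 2) (Fin 2) R) = 1
  rw [Matrix.one_fin_two]

lemma elL_pow (t : R) (n : ℕ) : elL t ^ n = elL (n * t) := by
  induction n with
  | zero => simp [elL_zero]
  | succ n ih =>
    rw [pow_succ, ih, elL_mul]
    congr 1
    push_cast
    ring

lemma elU_pow (t : R) (n : ℕ) : elU t ^ n = elU (n * t) := by
  induction n with
  | zero => simp [elU_zero]
  | succ n ih =>
    rw [pow_succ, ih, elU_mul]
    congr 1
    push_cast
    ring

lemma mem_of_isUnit_c (N : Subgroup (Matrix.SpecialLinearGroup (Fin 2) R))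
    (hU : ∀ t : R, elU t ∈ N) (hL : ∀ t : R, elL t ∈ N)
    (A : Matrix.SpecialLinearGroup (Fin 2) R) (hc : IsUnit ((A : Matrix (Fin 2) (Fin 2) R) 1 0)) :
    A ∈ N := by
  obtain ⟨u, hu⟩ := hc
  set M : Matrix (Fin 2) (Fin 2) R := (A : Matrix (Fin 2) (Fin 2) R) with hM
  set a := M 0 0 with ha
  set b := M 0 1 with hb
  set c := M 1 0 with hcc
  set d := M 1 1 with hd
  have hA : M = !![a, b; c, d] := Matrix.eta_fin_two M
  set x : R := (1 - a) * ↑u⁻¹ with hx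
  have huc : (↑u⁻¹ : R) * c = 1 := by rw [← hu]; exact u.inv_mul
  have hxc : a + x * c = 1 := by
    rw [hx, mul_assoc, huc]; ring
  set C := elL (-c) * (elU x * A) with hC
  have hCmat : (C : Matrix (Fin 2) (Fin 2) R) =
      !![a + x * c, b + x * d; -c * (a + x * c) + c, -c * (b + x * d) + d] := by
    show (!![1, 0; -c, 1] : Matrix (Fin 2) (Fin 2) R) * (!![1, x; 0, 1] * M) = _
    rw [hA, Matrix.mul_fin_two, Matrix.mul_fin_two]
    congr 1 <;> ring
  have hdetC : (-c * (b + x * d) + d) = 1 := by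
    have h2 : (C : Matrix (Fin 2) (Fin 2) R).det = 1 := C.2
    rw [hCmat, Matrix.det_fin_two_of, hxc] at h2
    linear_combination h2
  have hCeq : C = elU (b + x * d) := by
    apply Subtype.ext
    rw [hCmat, hxc, hdetC]
    show _ = !![1, b + x * d; 0, 1]
    congr 1 <;> ring
  have hAeq : A = (elU x)⁻¹ * ((elL (-c))⁻¹ * C) := by
    rw [hC]; group
  rw [hAeq, hCeq]
  exact N.mul_mem (N.inv_mem (hU x)) (N.mul_mem (N.inv_mem (hL (-c))) (hU _))

lemma mem_of_elem (N : Subgroup (Matrix.SpecialLinearGroup (Fin 2) R)) [IsLocalRing R]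
    (hU : ∀ t : R, elU t ∈ N) (hL : ∀ t : R, elL t ∈ N)
    (A : Matrix.SpecialLinearGroup (Fin 2) R) : A ∈ N := by
  by_cases hc : IsUnit ((A : Matrix (Fin 2) (Fin 2) R) 1 0)
  · exact mem_of_isUnit_c N hU hL A hc
  · set M : Matrix (Fin 2) (Fin 2) R := (A : Matrix (Fin 2) (Fin 2) R) with hM
    have hdet : M 0 0 * M 1 1 - M 0 1 * M 1 0 = 1 := by
      have := A.2; rwa [Matrix.det_fin_two] at this
    have hcm : M 1 0 ∈ IsLocalRing.maximalIdeal R := by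
      rwa [IsLocalRing.mem_maximalIdeal, mem_nonunits_iff]
    have ha : IsUnit (M 0 0) := by
      by_contra hna
      have h00 : M 0 0 ∈ IsLocalRing.maximalIdeal R := by
        rwa [IsLocalRing.mem_maximalIdeal, mem_nonunits_iff]
      have : (1 : R) ∈ IsLocalRing.maximalIdeal R := by
        rw [← hdet]
        exact Ideal.sub_mem _ (Ideal.mul_mem_right _ _ h00) (Ideal.mul_mem_left _ _ hcm)
      exact (IsLocalRing.maximalIdeal.isMaximal R).ne_top (Ideal.eq_top_of_isUnit_mem _ this isUnit_one)
    set B := elL 1 * A with hB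
    have hB10 : (B : Matrix (Fin 2) (Fin 2) R) 1 0 = M 0 0 + M 1 0 := by
      show ((!![1, 0; 1, 1] : Matrix (Fin 2) (Fin 2) R) * M) 1 0 = _
      rw [Matrix.mul_apply, Fin.sum_univ_two]
      simp
    have hBu : IsUnit ((B : Matrix (Fin 2) (Fin 2) R) 1 0) := by
      rw [hB10]
      by_contra hn
      have hmem : M 0 0 + M 1 0 ∈ IsLocalRing.maximalIdeal R := by
        rwa [IsLocalRing.mem_maximalIdeal, mem_nonunits_iff]
      have : M 0 0 ∈ IsLocalRing.maximalIdeal R := by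
        have := Ideal.sub_mem _ hmem hcm
        simpa using this
      rw [IsLocalRing.mem_maximalIdeal, mem_nonunits_iff] at this
      exact this ha
    have hBN : B ∈ N := mem_of_isUnit_c N hU hL B hBu
    have : A = (elL 1)⁻¹ * B := by rw [hB]; group
    rw [this]
    exact N.mul_mem (N.inv_mem (hL 1)) hBN

lemma mem_of_index_isUnit [IsLocalRing R] (N : Subgroup (Matrix.SpecialLinearGroup (Fin 2) R))
    [N.Normal] [N.FiniteIndex] (h : IsUnit ((N.index : ℕ) : R))
    (A : Matrix.SpecialLinearGroup (Fin 2) R) : A ∈ N := by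
  obtain ⟨u, hu⟩ := h
  have key : ∀ t : R, (N.index : R) * (↑u⁻¹ * t) = t := fun t => by
    rw [← hu, ← mul_assoc, u.mul_inv, one_mul]
  have hU : ∀ t : R, elU t ∈ N := fun t => by
    have := N.pow_index_mem (elU (↑u⁻¹ * t))
    rwa [elU_pow, key] at this
  have hL : ∀ t : R, elL t ∈ N := fun t => by
    have := N.pow_index_mem (elL (↑u⁻¹ * t))
    rwa [elL_pow, key] at this
  exact mem_of_elem N hU hL A

end SL2



/-- `SL₂(ℤ_ℓ)` for a prime `ℓ` (with the primality hypothesis carried explicitly). -/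
def SL2Zl (ℓ : ℕ) (hℓ : ℓ.Prime) : Type :=
  haveI : Fact ℓ.Prime := ⟨hℓ⟩
  Matrix.SpecialLinearGroup (Fin 2) ℤ_[ℓ]

noncomputable instance (ℓ : ℕ) (hℓ : ℓ.Prime) : Group (SL2Zl ℓ hℓ) :=
  haveI : Fact ℓ.Prime := ⟨hℓ⟩
  inferInstanceAs (Group (Matrix.SpecialLinearGroup (Fin 2) ℤ_[ℓ]))

/-- The `ℓ`-adic topology on `SL₂(ℤ_ℓ)`, induced from the (product) topology on matrices. -/
instance (ℓ : ℕ) (hℓ : ℓ.Prime) : TopologicalSpace (SL2Zl ℓ hℓ) :=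
  haveI : Fact ℓ.Prime := ⟨hℓ⟩
  inferInstanceAs (TopologicalSpace {A : Matrix (Fin 2) (Fin 2) ℤ_[ℓ] // A.det = 1})

/-- The profinite group `S_{≠p} = ∏_{ℓ prime, ℓ ≠ p} SL₂(ℤ_ℓ)`, with the product topology. -/
def SNe (p : ℕ) : Type :=
  ∀ ℓ : {ℓ : ℕ // ℓ.Prime ∧ ℓ ≠ p}, SL2Zl ℓ.1 ℓ.2.1

noncomputable instance (p : ℕ) : Group (SNe p) :=
  inferInstanceAs (Group (∀ ℓ : {ℓ : ℕ // ℓ.Prime ∧ ℓ ≠ p}, SL2Zl ℓ.1 ℓ.2.1))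

instance (p : ℕ) : TopologicalSpace (SNe p) :=
  inferInstanceAs (TopologicalSpace (∀ ℓ : {ℓ : ℕ // ℓ.Prime ∧ ℓ ≠ p}, SL2Zl ℓ.1 ℓ.2.1))

/-- fix a prime `p` and a positive integer `B`.  Any open subgroup `H` of
`S_{≠p} = ∏_{ℓ ≠ p} SL₂(ℤ_ℓ)` of (finite) index at most `B` contains
`∏_{ℓ ≤ B!, ℓ ≠ p} {1} × ∏_{ℓ > B!, ℓ ≠ p} SL₂(ℤ_ℓ)`; that is, `H` contains the obviously
embedded factor `SL₂(ℤ_ℓ)` for every prime `ℓ ≠ p` with `ℓ > B!`. -/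
theorem mulSingle_mem_of_open_subgroup_of_index_le
    (p : ℕ) (hp : p.Prime) (B : ℕ) (hB : 0 < B)
    (H : Subgroup (SNe p)) (hopen : IsOpen (H : Set (SNe p)))
    (hfin : H.index ≠ 0) (hle : H.index ≤ B) :
    ∀ ℓ : {ℓ : ℕ // ℓ.Prime ∧ ℓ ≠ p}, Nat.factorial B < ℓ.1 →
      ∀ x : SL2Zl ℓ.1 ℓ.2.1, Pi.mulSingle ℓ x ∈ H := by
  intro ℓ hℓB x
  haveI : Fact ℓ.1.Prime := ⟨ℓ.2.1⟩
  let φ : SL2Zl ℓ.1 ℓ.2.1 →* SNe p :=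
    MonoidHom.mulSingle (fun l : {l : ℕ // l.Prime ∧ l ≠ p} => SL2Zl l.1 l.2.1) ℓ
  set K : Subgroup (SL2Zl ℓ.1 ℓ.2.1) := H.comap φ with hK
  have hK0 : K.index ≠ 0 := by
    rw [hK, Subgroup.index_comap]
    intro h
    exact hfin (Subgroup.index_eq_zero_of_relIndex_eq_zero h)
  have hKle : K.index ≤ B := by
    rw [hK, Subgroup.index_comap]
    calc H.relIndex φ.range ≤ H.relIndex ⊤ :=
          Subgroup.relIndex_le_of_le_right le_top (by rwa [Subgroup.relIndex_top_right])
      _ = H.index := H.relIndex_top_right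
      _ ≤ B := hle
  haveI : K.FiniteIndex := ⟨hK0⟩
  set N := K.normalCore with hN
  haveI : N.Normal := Subgroup.normalCore_normal K
  haveI : N.FiniteIndex := Subgroup.finiteIndex_normalCore K
  have hNdvd : N.index ∣ (K.index).factorial := by
    rw [hN, Subgroup.normalCore_eq_ker, Subgroup.index_ker]
    haveI : Fintype (SL2Zl ℓ.1 ℓ.2.1 ⧸ K) := Fintype.ofFinite _
    haveI : DecidableEq (SL2Zl ℓ.1 ℓ.2.1 ⧸ K) := Classical.decEq _
    have h1 : Nat.card (MulAction.toPermHom (SL2Zl ℓ.1 ℓ.2.1) (SL2Zl ℓ.1 ℓ.2.1 ⧸ K)).range ∣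
        Nat.card (Equiv.Perm (SL2Zl ℓ.1 ℓ.2.1 ⧸ K)) := Subgroup.card_subgroup_dvd_card _
    have h2 : Nat.card (Equiv.Perm (SL2Zl ℓ.1 ℓ.2.1 ⧸ K)) = (K.index).factorial := by
      rw [Nat.card_eq_fintype_card, Fintype.card_perm, ← Nat.card_eq_fintype_card]
      rfl
    rwa [h2] at h1
  have hNleB : N.index ≤ B.factorial :=
    Nat.le_of_dvd (Nat.factorial_pos B) (hNdvd.trans (Nat.factorial_dvd_factorial hKle))
  have hN0 : N.index ≠ 0 := Subgroup.FiniteIndex.index_ne_zero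
  have hunit : IsUnit ((N.index : ℕ) : ℤ_[ℓ.1]) := by
    by_contra h
    rw [PadicInt.not_isUnit_iff] at h
    have hd : (ℓ.1 : ℤ) ∣ (N.index : ℤ) := by
      rw [← PadicInt.norm_int_lt_one_iff_dvd]
      simpa using h
    have hdvd : ℓ.1 ∣ N.index := Int.ofNat_dvd.mp hd
    have := Nat.le_of_dvd (Nat.pos_of_ne_zero hN0) hdvd
    omega
  have hx : x ∈ N := @mem_of_index_isUnit _ _ _ N (Subgroup.normalCore_normal K) (Subgroup.finiteIndex_normalCore K) hunit x
  have hxK : x ∈ K := K.normalCore_le hx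
  rw [hK, Subgroup.mem_comap] at hxK
  exact hxK
end

section
/- Let ℓ be a prime and let N be an open normal subgroup of SL_2(Z_ℓ) of finite index n with n < ℓ. Then N = SL_2(Z_ℓ). (Indeed, since 1/n ∈ Z_ℓ, the matrix [[1,1],[0,1]] equals [[1,1/n],[0,1]]^n and hence lies in N, and similarly [[1,0],[1,1]] ∈ N; these two matrices generate a dense subgroup of SL_2(Z_ℓ), and N is closed.) -/
/-!
Over a local ring, `SL₂` is generated by transvections: a matrix whose lower-left entry is a
unit is an upper-lower-upper product of transvections, and adding the first row to the second
makes that entry a unit otherwise. If `N` is normal of index `n`, then `g ^ n ∈ N` for every `g`;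
when `n` is invertible in the ring every transvection is the `n`-th power of another one, so `N`
contains all transvections. In `ℤ_ℓ` every `0 < n < ℓ` is invertible.
-/

/-- The `ℓ`-adic topology on `SL₂(ℤ_ℓ)`, induced from the (product) topology on matrices. -/
instance (ℓ : ℕ) [Fact ℓ.Prime] :
    TopologicalSpace (Matrix.SpecialLinearGroup (Fin 2) ℤ_[ℓ]) :=
  inferInstanceAs (TopologicalSpace {A : Matrix (Fin 2) (Fin 2) ℤ_[ℓ] // A.det = 1})

open Matrix MatrixGroups

namespace PadicInt

lemma isUnit_natCast_iff {p : ℕ} [Fact p.Prime] {n : ℕ} : IsUnit (n : ℤ_[p]) ↔ p.Coprime n := by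
  rw [isUnit_iff, norm_natCast_eq_one_iff]

end PadicInt

namespace Matrix.SpecialLinearGroup

section CommRing

variable {ι R : Type*} [DecidableEq ι] [Fintype ι] [CommRing R]

lemma transvection_pow {i j : ι} (hij : i ≠ j) (b : R) (n : ℕ) :
    transvection hij b ^ n = transvection hij (n * b) := by
  induction n with
  | zero => simp
  | succ n ih => rw [pow_succ, ih, ← transvection_add, Nat.cast_succ, add_one_mul]

lemma transvection_mem_of_isUnit_index (N : Subgroup (SpecialLinearGroup ι R)) [N.Normal]
    (hN : IsUnit (N.index : R)) {i j : ι} (hij : i ≠ j) (b : R) : transvection hij b ∈ N := by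
  have h := N.pow_index_mem (transvection hij (Ring.inverse (N.index : R) * b))
  rwa [transvection_pow, ← mul_assoc, Ring.mul_inverse_cancel _ hN, one_mul] at h

end CommRing

variable {R : Type*} [CommRing R]

lemma coe_transvection_zero_one (b : R) :
    (transvection zero_ne_one b : SL(2, R)) = !![1, b; 0, 1] := by
  ext i j
  fin_cases i <;> fin_cases j <;> simp [transvection_coe]

lemma coe_transvection_one_zero (b : R) :
    (transvection one_ne_zero b : SL(2, R)) = !![1, 0; b, 1] := by
  ext i j
  fin_cases i <;> fin_cases j <;> simp [transvection_coe]

lemma eq_transvection_mul_transvection_mul_transvection (A : SL(2, R)) (hc : IsUnit (A 1 0)) :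
    A = transvection zero_ne_one ((A 0 0 - 1) * Ring.inverse (A 1 0)) *
      transvection one_ne_zero (A 1 0) *
      transvection zero_ne_one ((A 1 1 - 1) * Ring.inverse (A 1 0)) := by
  have hdet : A 0 0 * A 1 1 - A 0 1 * A 1 0 = 1 := by rw [← det_fin_two]; exact A.2
  have hinv := Ring.inverse_mul_cancel _ hc
  refine Subtype.ext ?_
  rw [coe_mul, coe_mul, coe_transvection_zero_one, coe_transvection_one_zero,
    coe_transvection_zero_one, mul_fin_two, mul_fin_two]
  conv_lhs => rw [eta_fin_two (A : Matrix (Fin 2) (Fin 2) R)]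
  refine congrArg of (vec2_eq (vec2_eq ?_ ?_) (vec2_eq ?_ ?_))
  · linear_combination (1 - A 0 0) * hinv
  · linear_combination (-A 0 1 - (A 0 0 - 1) * (A 1 1 - 1) * Ring.inverse (A 1 0)) * hinv -
      Ring.inverse (A 1 0) * hdet
  · ring
  · linear_combination (1 - A 1 1) * hinv

lemma isUnit_apply_one_zero_or_isUnit_add [IsLocalRing R] (A : SL(2, R)) :
    IsUnit (A 1 0) ∨ IsUnit (A 0 0 + A 1 0) := by
  have hdet : A 0 0 * A 1 1 + -(A 0 1 * A 1 0) = 1 := by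
    rw [← sub_eq_add_neg, ← det_fin_two]; exact A.2
  by_cases hc : IsUnit (A 1 0)
  · exact .inl hc
  right
  have ha : IsUnit (A 0 0) := by
    obtain h | h := IsLocalRing.isUnit_or_isUnit_of_isUnit_add (hdet ▸ isUnit_one)
    · exact isUnit_of_mul_isUnit_left h
    · exact absurd (isUnit_of_mul_isUnit_right ((IsUnit.neg_iff _).1 h)) hc
  replace ha : IsUnit ((A 0 0 + A 1 0) + -A 1 0) := by rwa [add_neg_cancel_right]
  exact (IsLocalRing.isUnit_or_isUnit_of_isUnit_add ha).resolve_right (by rwa [IsUnit.neg_iff])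

theorem closure_range_toSpecialLinearGroup_eq_top [IsLocalRing R] :
    Subgroup.closure (Set.range (TransvectionStruct.toSpecialLinearGroup :
      TransvectionStruct (Fin 2) R → SL(2, R))) = ⊤ := by
  set H := Subgroup.closure (Set.range (TransvectionStruct.toSpecialLinearGroup :
      TransvectionStruct (Fin 2) R → SL(2, R)))
  have htrans {i j : Fin 2} (hij : i ≠ j) (b : R) : transvection hij b ∈ H :=
    Subgroup.subset_closure ⟨⟨i, j, hij, b⟩, rfl⟩
  have hunit (A : SL(2, R)) (hc : IsUnit (A 1 0)) : A ∈ H := by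
    rw [eq_transvection_mul_transvection_mul_transvection A hc]
    exact H.mul_mem (H.mul_mem (htrans _ _) (htrans _ _)) (htrans _ _)
  refine eq_top_iff.2 fun A _ ↦ ?_
  obtain hc | hac := isUnit_apply_one_zero_or_isUnit_add A
  · exact hunit A hc
  · have hrow : (transvection one_ne_zero 1 * A : SL(2, R)) 1 0 = A 0 0 + A 1 0 := by
      simp [coe_transvection_one_zero, mul_apply, Fin.sum_univ_two]
    rw [← inv_mul_cancel_left (transvection one_ne_zero (1 : R)) A]
    exact H.mul_mem (H.inv_mem (htrans _ _)) (hunit _ (hrow ▸ hac))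

end Matrix.SpecialLinearGroup

theorem open_normal_subgroup_eq_top_of_index_lt_general
    (ℓ : ℕ) [Fact ℓ.Prime]
    (N : Subgroup (Matrix.SpecialLinearGroup (Fin 2) ℤ_[ℓ])) [N.Normal]
    (hfin : N.index ≠ 0) (hlt : N.index < ℓ) :
    N = ⊤ := by
  have hunit : IsUnit (N.index : ℤ_[ℓ]) :=
    PadicInt.isUnit_natCast_iff.2 (Nat.coprime_of_lt_prime hfin hlt Fact.out)
  rw [eq_top_iff, ← SpecialLinearGroup.closure_range_toSpecialLinearGroup_eq_top,
    Subgroup.closure_le]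
  rintro _ ⟨t, rfl⟩
  exact SpecialLinearGroup.transvection_mem_of_isUnit_index N hunit t.hij t.c

/-- let `ℓ` be a prime and let `N` be an open normal subgroup of `SL₂(ℤ_ℓ)` of
finite index `n` with `n < ℓ`.  Then `N = SL₂(ℤ_ℓ)`. -/
theorem open_normal_subgroup_eq_top_of_index_lt
    (ℓ : ℕ) [Fact ℓ.Prime]
    (N : Subgroup (Matrix.SpecialLinearGroup (Fin 2) ℤ_[ℓ])) [N.Normal]
    (hopen : IsOpen (N : Set (Matrix.SpecialLinearGroup (Fin 2) ℤ_[ℓ])))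
    (hfin : N.index ≠ 0) (hlt : N.index < ℓ) :
    N = ⊤ :=
  open_normal_subgroup_eq_top_of_index_lt_general ℓ N hfin hlt
end
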